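/- For any three sets A, B, C of a domain Ω, each finite with cardinality at least 2, such that none of the three is strictly contained in any of the other two, the function δ satisfies the triangle inequality: δ(A,C) ≤ δ(A,B) + δ(B,C). -/
import Mathlib


noncomputable def t (x : ℝ) : ℝ := if 1 ≤ x then x else 1

noncomputable def delta {Ω : Type*} [DecidableEq Ω] (A B : Finset Ω) : ℝ :=
  Real.logb 2 (t (((B \ A).card : ℝ) * (A.card : ℝ)))

noncomputable def infoDist {Ω : Type*} [DecidableEq Ω] (A B : Finset Ω) : ℝ :=
  max (delta A B) (delta B A)

lemma t_one_le (x : ℝ) : 1 ≤ t x := by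
  unfold t; split <;> linarith

lemma t_pos (x : ℝ) : 0 < t x := lt_of_lt_of_le one_pos (t_one_le x)

lemma t_mono {x y : ℝ} (h : x ≤ y) : t x ≤ t y := by
  unfold t; split_ifs <;> linarith

lemma t_of_one_le {x : ℝ} (h : 1 ≤ x) : t x = x := if_pos h

theorem stmt_2 {Ω : Type*} [DecidableEq Ω] (A B C : Finset Ω)
    (hA : 2 ≤ A.card) (hB : 2 ≤ B.card) (hC : 2 ≤ C.card)
    (hAB : ¬ A ⊂ B) (hBA : ¬ B ⊂ A)
    (hAC : ¬ A ⊂ C) (hCA : ¬ C ⊂ A)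
    (hBC : ¬ B ⊂ C) (hCB : ¬ C ⊂ B) :
    delta A C ≤ delta A B + delta B C := by
  have key : t (((C \ A).card : ℝ) * (A.card : ℝ)) ≤
      t (((B \ A).card : ℝ) * (A.card : ℝ)) * t (((C \ B).card : ℝ) * (B.card : ℝ)) := by
    rcases Nat.eq_zero_or_pos (B \ A).card with hp | hp
    · -- B ⊆ A, hence B = A
      have hsub : B ⊆ A := by
        rwa [← Finset.sdiff_eq_empty_iff_subset, ← Finset.card_eq_zero]
      have hEq : B = A := by
        by_contra hne
        exact hBA (Finset.ssubset_iff_subset_ne.mpr ⟨hsub, hne⟩)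
      subst hEq
      simp only [hp, Nat.cast_zero, zero_mul]
      have h1 : t (0 : ℝ) = 1 := by unfold t; norm_num
      rw [h1, one_mul]
    · rcases Nat.eq_zero_or_pos (C \ B).card with hq | hq
      · have hsub : C ⊆ B := by
          rwa [← Finset.sdiff_eq_empty_iff_subset, ← Finset.card_eq_zero]
        have hEq : C = B := by
          by_contra hne
          exact hCB (Finset.ssubset_iff_subset_ne.mpr ⟨hsub, hne⟩)
        subst hEq
        simp only [hq, Nat.cast_zero, zero_mul]
        have h1 : t (0 : ℝ) = 1 := by unfold t; norm_num
        rw [h1, mul_one]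
      · -- both nonempty
        have hr : (C \ A).card ≤ (B \ A).card + (C \ B).card := by
          calc (C \ A).card ≤ ((B \ A) ∪ (C \ B)).card := by
                apply Finset.card_le_card
                intro x hx
                simp only [Finset.mem_sdiff, Finset.mem_union] at hx ⊢
                by_cases hxB : x ∈ B
                · exact Or.inl ⟨hxB, hx.2⟩
                · exact Or.inr ⟨hx.1, hxB⟩
            _ ≤ _ := Finset.card_union_le _ _
        have hnat : (C \ A).card * A.card ≤
            ((B \ A).card * A.card) * ((C \ B).card * B.card) := by
          have h1 : (B \ A).card ≤ (B \ A).card * (C \ B).card :=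
            Nat.le_mul_of_pos_right _ hq
          have h2 : (C \ B).card ≤ (B \ A).card * (C \ B).card :=
            Nat.le_mul_of_pos_left _ hp
          have h3 : (B \ A).card + (C \ B).card ≤ 2 * ((B \ A).card * (C \ B).card) := by
            linarith
          calc (C \ A).card * A.card
              ≤ ((B \ A).card + (C \ B).card) * A.card := Nat.mul_le_mul_right _ hr
            _ ≤ (2 * ((B \ A).card * (C \ B).card)) * A.card := Nat.mul_le_mul_right _ h3
            _ ≤ (B.card * ((B \ A).card * (C \ B).card)) * A.card :=
                Nat.mul_le_mul_right _ (Nat.mul_le_mul_right _ hB)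
            _ = ((B \ A).card * A.card) * ((C \ B).card * B.card) := by ring
        have h1 : (1 : ℝ) ≤ ((B \ A).card : ℝ) * (A.card : ℝ) := by
          have : 1 * 2 ≤ (B \ A).card * A.card := Nat.mul_le_mul hp hA
          have := (Nat.cast_le (α := ℝ)).mpr this
          push_cast at this ⊢; linarith
        have h2 : (1 : ℝ) ≤ ((C \ B).card : ℝ) * (B.card : ℝ) := by
          have : 1 * 2 ≤ (C \ B).card * B.card := Nat.mul_le_mul hq hB
          have := (Nat.cast_le (α := ℝ)).mpr this
          push_cast at this ⊢; linarith
        have hprod : (1 : ℝ) ≤ (((B \ A).card : ℝ) * A.card) * (((C \ B).card : ℝ) * B.card) :=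
          one_le_mul_of_one_le_of_one_le h1 h2
        calc t (((C \ A).card : ℝ) * (A.card : ℝ))
            ≤ t ((((B \ A).card : ℝ) * A.card) * (((C \ B).card : ℝ) * B.card)) := by
              apply t_mono
              have := (Nat.cast_le (α := ℝ)).mpr hnat
              push_cast at this ⊢; linarith
          _ = (((B \ A).card : ℝ) * A.card) * (((C \ B).card : ℝ) * B.card) :=
              t_of_one_le hprod
          _ = t (((B \ A).card : ℝ) * A.card) * t (((C \ B).card : ℝ) * B.card) := by
              rw [t_of_one_le h1, t_of_one_le h2]
  unfold delta
  rw [← Real.logb_mul (ne_of_gt (t_pos _)) (ne_of_gt (t_pos _))]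
  exact Real.logb_le_logb_of_le (by norm_num) (t_pos _) key
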